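/- arXiv:2511.02935 — 5 statements merged into one kernel-verified Lean document; each statement's English description precedes it below -/
import Mathlib

section
/- For a matroid M on ground set E and a subset F ⊆ E, F is a flat of M if and only if E \ F is a union of circuits (a cyclic set) of the dual matroid M*. -/
open Set

variable {α β : Type*}

/-- The rank of a matroid: the (common) cardinality of its bases. -/
noncomputable def Matroid.mrk (M : Matroid α) : ℕ := sSup (Set.ncard '' {B | M.IsBase B})

/-- A hyperplane of a matroid: a maximal proper flat
(equivalently, a flat of rank `r(M) - 1`). -/
def Matroid.IsHyperplane (M : Matroid α) (H : Set α) : Prop :=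
  M.IsFlat H ∧ H ≠ M.E ∧ ∀ F, M.IsFlat F → H ⊆ F → F = H ∨ F = M.E

/-- A circuit of a matroid: a minimal dependent set. -/
def Matroid.IsCircuit' (M : Matroid α) (Ct : Set α) : Prop :=
  Ct ⊆ M.E ∧ ¬ M.Indep Ct ∧ ∀ D, D ⊂ Ct → M.Indep D

/-- A point of a matroid: a rank-one flat, i.e. the closure of a nonloop. -/
def Matroid.IsPoint (M : Matroid α) (P : Set α) : Prop :=
  M.IsFlat P ∧ ∃ e, e ∉ M.closure ∅ ∧ P = M.closure {e}

/-! `F ⊆ E` is flat exactly when every `e ∈ E \ F` lies in a cocircuit disjoint from `F`, which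
is what it means for `E \ F` to be a union of cocircuits. A cocircuit `K` has nonspanning
complement while `E \ (K \ {x})` spans for each `x ∈ K`, so no `x ∈ K` lies in `cl(E \ K)`: the
complement of a cocircuit is a flat. Conversely, for `e` outside a flat `F`, extend a basis of `F`
by `e` to a base `B`; then `E \ cl(B \ {e})` is a cocircuit containing `e` and missing `F`. -/

theorem Set.exists_sUnion_eq_iff_forall_mem {P : Set α → Prop} {S : Set α} :
    (∃ 𝓒 : Set (Set α), (∀ K ∈ 𝓒, P K) ∧ S = ⋃₀ 𝓒) ↔ ∀ e ∈ S, ∃ K, P K ∧ e ∈ K ∧ K ⊆ S := by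
  constructor
  · rintro ⟨𝓒, h𝓒, rfl⟩ e he
    obtain ⟨K, hK, heK⟩ := mem_sUnion.1 he
    exact ⟨K, h𝓒 K hK, heK, subset_sUnion_of_mem hK⟩
  · intro h
    refine ⟨{K | P K ∧ K ⊆ S}, fun K hK => hK.1, ?_⟩
    refine (sUnion_subset fun K hK => hK.2).antisymm' fun e he => ?_
    obtain ⟨K, hK, heK, hKS⟩ := h e he
    exact ⟨K, ⟨hK, hKS⟩, heK⟩

namespace Matroid

variable {M : Matroid α} {F K : Set α} {e : α}

theorem isCircuit'_iff_isCircuit {C : Set α} : M.IsCircuit' C ↔ M.IsCircuit C := by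
  rw [isCircuit_iff_forall_ssubset, Dep, IsCircuit']
  tauto

theorem IsCocircuit.isFlat_compl (hK : M.IsCocircuit K) : M.IsFlat (M.E \ K) := by
  rw [isCocircuit_iff_minimal_compl_nonspanning, minimal_iff_forall_ssubset] at hK
  refine isFlat_iff_closure_eq.2 <| (M.subset_closure _ sdiff_subset).antisymm' fun x hx => ?_
  have hxE : x ∈ M.E := M.closure_subset_ground _ hx
  refine ⟨hxE, fun hxK => hK.1 ?_⟩
  have hspan : M.Spanning (M.E \ (K \ {x})) := not_not.1 (hK.2 (sdiff_singleton_ssubset.2 hxK))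
  rwa [sdiff_sdiff_right, inter_eq_self_of_subset_right (singleton_subset_iff.2 hxE),
    union_singleton, ← closure_spanning_iff, closure_insert_eq_of_mem_closure hx,
    closure_spanning_iff] at hspan

theorem IsFlat.exists_isCocircuit_mem_subset_compl (hF : M.IsFlat F) (he : e ∈ M.E \ F) :
    ∃ K, M.IsCocircuit K ∧ e ∈ K ∧ K ⊆ M.E \ F := by
  obtain ⟨I, hI⟩ := M.exists_isBasis F
  have heI : e ∉ I := fun h => he.2 (hI.subset h)
  have hIe : M.Indep (insert e I) := by
    rw [hI.indep.insert_indep_iff_of_notMem heI, hI.closure_eq_closure, hF.closure]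
    exact he
  obtain ⟨B, hB, hIB⟩ := hIe.exists_isBase_superset
  have heB : e ∈ B := hIB (mem_insert _ _)
  have hFcl : F ⊆ M.closure (B \ {e}) := by
    rw [← hF.closure, ← hI.closure_eq_closure]
    exact M.closure_subset_closure (subset_sdiff_singleton ((subset_insert _ _).trans hIB) heI)
  exact ⟨_, hB.compl_closure_sdiff_singleton_isCocircuit heB,
    ⟨he.1, hB.indep.notMem_closure_sdiff_of_mem heB⟩, sdiff_subset_sdiff_right hFcl⟩

theorem isFlat_iff_forall_exists_isCocircuit (hF : F ⊆ M.E) :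
    M.IsFlat F ↔ ∀ e ∈ M.E \ F, ∃ K, M.IsCocircuit K ∧ e ∈ K ∧ K ⊆ M.E \ F := by
  refine ⟨fun hFl e he => hFl.exists_isCocircuit_mem_subset_compl he, fun h => ?_⟩
  refine isFlat_iff_closure_eq.2 <| (M.subset_closure F hF).antisymm' fun e he => ?_
  by_contra heF
  obtain ⟨K, hK, heK, hKF⟩ := h e ⟨M.closure_subset_ground F he, heF⟩
  have hFK : F ⊆ M.E \ K := fun f hf => ⟨hF hf, fun hfK => (hKF hfK).2 hf⟩
  have hclF : M.closure F ⊆ M.E \ K := hK.isFlat_compl.closure ▸ M.closure_subset_closure hFK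
  exact (hclF he).2 heK

end Matroid

theorem flat_iff_compl_cyclic_dual_general (M : Matroid α) (F : Set α)
    (hF : F ⊆ M.E) :
    M.IsFlat F ↔ ∃ 𝓒 : Set (Set α), (∀ Ct ∈ 𝓒, M✶.IsCircuit' Ct) ∧ M.E \ F = ⋃₀ 𝓒 := by
  simp only [Matroid.isCircuit'_iff_isCircuit, ← Matroid.isCocircuit_def]
  rw [Set.exists_sUnion_eq_iff_forall_mem]
  exact Matroid.isFlat_iff_forall_exists_isCocircuit hF

/-- `F` is a flat of `M` iff `E \ F` is a union of circuits
(a cyclic set) of the dual matroid `M✶`. -/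
theorem flat_iff_compl_cyclic_dual (M : Matroid α) [M.Finite] (F : Set α)
    (hF : F ⊆ M.E) :
    M.IsFlat F ↔ ∃ 𝓒 : Set (Set α), (∀ Ct ∈ 𝓒, M✶.IsCircuit' Ct) ∧ M.E \ F = ⋃₀ 𝓒 :=
  flat_iff_compl_cyclic_dual_general M F hF
end

section
/- Let X be a zero-nonzero pattern and let X' be obtained from X by appending one row. Then the matroid minimum rank satisfies mr(X) ≤ mr(X') ≤ mr(X) + 1, where mr(Y) denotes the minimum rank over all matroids M on the column set of Y such that the zero set of each row of Y is a flat of M. -/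
/-!
More rows only shrink the class of admissible matroids, so `mr X ≤ mr X'`. For the upper bound
take `M ∈ RX X` of rank `mr X` and let `Z` be the zero set of the new row. The elementary lift of
`M` towards `Z`, whose independent sets are the sets of `M`-nullity at most one meeting `Z` in an
`M`-independent set, has rank at most `r(M) + 1`; every flat of `M` stays a flat, and so does `Z`,
because adding an element outside `Z` to a basis of `Z` raises the nullity by at most one and
leaves the trace on `Z` unchanged.
-/

open Set

variable {α β : Type*}

variable {R C : Type*}

/-- Zero set of a set of columns: rows that are zero in every column of `A`. -/
def ZCol (X : R → C → Bool) (A : Set C) : Set R := {r | ∀ a ∈ A, X r a = false}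

/-- Zero set of a set of rows: columns that are zero in every row of `B`. -/
def ZRow (X : R → C → Bool) (B : Set R) : Set C := {c | ∀ b ∈ B, X b c = false}

/-- The intersection lattice of a pattern. -/
def LX (X : R → C → Bool) : Set (Set C) := {F | ∃ S : Set R, F = ZRow X S}

/-- The class of matroids associated with a pattern `X`: matroids on the column
set in which the zero set of every row of `X` is a flat. -/
def RX (X : R → C → Bool) : Set (Matroid C) :=
  {M | M.E = Set.univ ∧ ∀ r : R, M.IsFlat (ZRow X {r})}

/-- The matroid minimum rank of a pattern. -/
noncomputable def mr (X : R → C → Bool) : ℕ := sInf (Matroid.mrk '' RX X)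
namespace Matroid

variable {M : Matroid α} {Z I J F : Set α} {x : α}

lemma mrk_eq_toNat_eRank (M : Matroid α) : M.mrk = M.eRank.toNat := by
  have hbases : Set.ncard '' {B | M.IsBase B} = (fun _ ↦ M.eRank.toNat) '' {B | M.IsBase B} :=
    image_congr fun B hB ↦ by rw [← hB.encard_eq_eRank, ncard_def]
  rw [mrk, hbases, Set.Nonempty.image_const (s := {B | M.IsBase B}) M.exists_isBase,
    csSup_singleton]

lemma Indep.encard_le_encard_of_subset_closure (hJ : M.Indep J) (hJI : J ⊆ M.closure I) :
    J.encard ≤ I.encard :=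
  calc J.encard ≤ M.eRk (M.closure I) := hJ.encard_le_eRk_of_subset hJI
    _ = M.eRk I := M.eRk_closure_eq I
    _ ≤ I.encard := M.eRk_le_encard I

lemma isFlat_of_forall_isBasis_insert_indep (hF : F ⊆ M.E)
    (h : ∀ ⦃I x⦄, M.IsBasis I F → x ∈ M.E \ F → M.Indep (insert x I)) : M.IsFlat F := by
  refine isFlat_iff_closure_eq.2 (Subset.antisymm (fun x hx ↦ ?_) (M.subset_closure F hF))
  by_contra hxF
  obtain ⟨I, hI⟩ := M.exists_isBasis F hF
  rw [← hI.closure_eq_closure] at hx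
  have hdep := (hI.indep.mem_closure_iff_of_notMem fun hxI ↦ hxF (hI.subset hxI)).1 hx
  exact hdep.not_indep (h hI ⟨mem_ground_of_mem_closure hx, hxF⟩)

def ElemLiftIndep (M : Matroid α) (Z I : Set α) : Prop :=
  I ⊆ M.E ∧ M.Indep (I ∩ Z) ∧ (M.Indep I ∨ ∃ e ∈ I, M.Indep (I \ {e}))

lemma elemLiftIndep_insert_of_indep (hI : M.Indep I) (hx : x ∈ M.E)
    (hxZ : M.Indep (insert x I ∩ Z)) : M.ElemLiftIndep Z (insert x I) :=
  ⟨insert_subset hx hI.subset_ground, hxZ,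
    .inr ⟨x, mem_insert x I, hI.subset (sdiff_singleton_subset_iff.2 Subset.rfl)⟩⟩

namespace ElemLiftIndep

lemma subset (hJ : M.ElemLiftIndep Z J) (hIJ : I ⊆ J) : M.ElemLiftIndep Z I := by
  refine ⟨hIJ.trans hJ.1, hJ.2.1.subset (inter_subset_inter_left _ hIJ), ?_⟩
  obtain hJi | ⟨e, -, hJe⟩ := hJ.2.2
  · exact .inl (hJi.subset hIJ)
  by_cases heI : e ∈ I
  · exact .inr ⟨e, heI, hJe.subset (sdiff_subset_sdiff_left hIJ)⟩
  · exact .inl (hJe.subset (subset_sdiff_singleton hIJ heI))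

lemma insert_of_notMem_closure (hI : M.ElemLiftIndep Z I) (hx : x ∈ M.E \ M.closure I) :
    M.ElemLiftIndep Z (insert x I) := by
  have hxI : x ∉ I := notMem_of_mem_sdiff_closure hx
  have hins : ∀ K ⊆ I, M.Indep K → M.Indep (insert x K) := fun K hKI hK ↦
    hK.insert_indep_iff.2 (.inl ⟨hx.1, fun hxK ↦ hx.2 (M.closure_subset_closure hKI hxK)⟩)
  refine ⟨insert_subset hx.1 hI.1, (hins _ inter_subset_left hI.2.1).subset ?_, ?_⟩
  · rintro y ⟨rfl | hyI, hyZ⟩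
    exacts [mem_insert _ _, mem_insert_of_mem _ ⟨hyI, hyZ⟩]
  obtain hIi | ⟨e, heI, hIe⟩ := hI.2.2
  · exact .inl (hins I Subset.rfl hIi)
  · refine .inr ⟨e, mem_insert_of_mem x heI, ?_⟩
    rw [← insert_sdiff_singleton_comm (ne_of_mem_of_not_mem heI hxI).symm]
    exact hins _ sdiff_subset hIe

lemma exists_indep_subset_encard_le (hI : M.ElemLiftIndep Z I) :
    ∃ J ⊆ I, M.Indep J ∧ I.encard ≤ J.encard + 1 := by
  obtain hIi | ⟨e, heI, hIe⟩ := hI.2.2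
  · exact ⟨I, Subset.rfl, hIi, le_self_add⟩
  · exact ⟨I \ {e}, sdiff_subset, hIe, (encard_sdiff_singleton_add_one heI).ge⟩

lemma encard_le_eRank_add_one (hI : M.ElemLiftIndep Z I) : I.encard ≤ M.eRank + 1 := by
  obtain ⟨J, -, hJ, hIJ⟩ := hI.exists_indep_subset_encard_le
  exact hIJ.trans (by gcongr; exact hJ.encard_le_eRank)

lemma exists_insert_of_encard_lt (hI : M.ElemLiftIndep Z I) (hJ : M.ElemLiftIndep Z J)
    (hIJ : I.encard < J.encard) : ∃ e ∈ J, e ∉ I ∧ M.ElemLiftIndep Z (insert e I) := by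
  by_contra! hcon
  have hJcl : J ⊆ M.closure I := fun e heJ ↦ by
    by_contra he
    exact hcon e heJ (fun heI ↦ he (M.subset_closure I hI.1 heI))
      (hI.insert_of_notMem_closure ⟨hJ.1 heJ, he⟩)
  -- If `I` is `M`-independent, `J \ I` lies in `Z ∩ cl (I ∩ Z)`; otherwise `I \ {f}` spans `J`.
  by_cases hIi : M.Indep I
  · have hJZ : J ∩ Z ⊆ M.closure (I ∩ Z) := by
      rintro e ⟨heJ, heZ⟩
      by_contra he
      have heI : e ∉ I := fun heI ↦
        he (M.subset_closure _ (inter_subset_left.trans hI.1) ⟨heI, heZ⟩)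
      refine hcon e heJ heI (elemLiftIndep_insert_of_indep hIi (hJ.1 heJ) ?_)
      rw [insert_inter_of_mem heZ]
      exact hI.2.1.insert_indep_iff.2 (.inl ⟨hJ.1 heJ, he⟩)
    have hJZc : J \ Z ⊆ I \ Z := by
      rintro e ⟨heJ, heZ⟩
      refine ⟨by_contra fun heI ↦ hcon e heJ heI ?_, heZ⟩
      refine elemLiftIndep_insert_of_indep hIi (hJ.1 heJ) ?_
      rw [insert_inter_of_notMem heZ]
      exact hI.2.1
    rw [← encard_sdiff_add_encard_inter J Z, ← encard_sdiff_add_encard_inter I Z] at hIJ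
    exact hIJ.not_ge (add_le_add (encard_le_encard hJZc)
      (hJ.2.1.encard_le_encard_of_subset_closure hJZ))
  · obtain ⟨f, hfI, hIf⟩ := hI.2.2.resolve_left hIi
    have hfcl : f ∈ M.closure (I \ {f}) := by
      rw [hIf.mem_closure_iff_of_notMem (notMem_sdiff_of_mem rfl), insert_sdiff_singleton,
        insert_eq_of_mem hfI]
      exact ⟨hIi, hI.1⟩
    obtain ⟨J', hJ'J, hJ', hJJ'⟩ := hJ.exists_indep_subset_encard_le
    have hJ'I : J'.encard ≤ (I \ {f}).encard := hJ'.encard_le_encard_of_subset_closure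
      (by rw [closure_sdiff_singleton_eq_closure hfcl]; exact hJ'J.trans hJcl)
    refine hIJ.not_ge (hJJ'.trans ?_)
    rw [← encard_sdiff_singleton_add_one hfI]
    gcongr

end ElemLiftIndep

def elemLift (M : Matroid α) [M.RankFinite] (Z : Set α) : Matroid α :=
  (IndepMatroid.ofBddAugment M.E (M.ElemLiftIndep Z)
    ⟨empty_subset _, by simp, .inl M.empty_indep⟩
    (fun _ _ hJ hIJ ↦ hJ.subset hIJ)
    (fun _ _ hI hJ hIJ ↦ hI.exists_insert_of_encard_lt hJ hIJ)
    ⟨M.eRank.toNat + 1, fun _ hI ↦ by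
      rw [Nat.cast_add_one, ENat.natCast_toNat (M.eRank_ne_top_iff.2 inferInstance)]
      exact hI.encard_le_eRank_add_one⟩
    (fun _ hI ↦ hI.1)).matroid

variable [M.RankFinite]

@[simp] lemma elemLift_ground : (M.elemLift Z).E = M.E := rfl

@[simp] lemma elemLift_indep_iff : (M.elemLift Z).Indep I ↔ M.ElemLiftIndep Z I := Iff.rfl

lemma IsFlat.elemLift (hF : M.IsFlat F) : (M.elemLift Z).IsFlat F := by
  refine isFlat_of_forall_isBasis_insert_indep hF.subset_ground fun I x hI hx ↦ ?_
  refine (elemLift_indep_iff.1 hI.indep).insert_of_notMem_closure ⟨hx.1, fun hxI ↦ ?_⟩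
  exact hx.2 (hF.closure.subset (M.closure_subset_closure hI.subset hxI))

lemma isFlat_elemLift (hZ : Z ⊆ M.E) : (M.elemLift Z).IsFlat Z := by
  refine isFlat_of_forall_isBasis_insert_indep hZ fun I x hI hx ↦ ?_
  have hIZ : I ∩ Z = I := inter_eq_left.2 hI.subset
  have hIi : M.Indep I := hIZ ▸ (elemLift_indep_iff.1 hI.indep).2.1
  refine elemLiftIndep_insert_of_indep hIi hx.1 ?_
  rwa [insert_inter_of_notMem hx.2, hIZ]

lemma eRank_elemLift_le : (M.elemLift Z).eRank ≤ M.eRank + 1 := by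
  obtain ⟨B, hB⟩ := (M.elemLift Z).exists_isBase
  rw [← hB.encard_eq_eRank]
  exact (elemLift_indep_iff.1 hB.indep).encard_le_eRank_add_one

lemma mrk_elemLift_le : (M.elemLift Z).mrk ≤ M.mrk + 1 := by
  have hfin : M.eRank ≠ ⊤ := M.eRank_ne_top_iff.2 inferInstance
  rw [mrk_eq_toNat_eRank, mrk_eq_toNat_eRank, ← ENat.toNat_one,
    ← ENat.toNat_add hfin ENat.one_ne_top]
  exact ENat.toNat_le_toNat eRank_elemLift_le (by simpa using hfin)

end Matroid

lemma freeOn_univ_mem_RX (X : R → C → Bool) : Matroid.freeOn univ ∈ RX X :=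
  ⟨rfl, fun _ ↦ Matroid.isFlat_iff_closure_eq.2 <| by rw [Matroid.freeOn_closure_eq, inter_univ]⟩

lemma mr_le_mrk {X : R → C → Bool} {M : Matroid C} (hM : M ∈ RX X) : mr X ≤ M.mrk :=
  Nat.sInf_le ⟨M, hM, rfl⟩

lemma exists_mem_RX_mrk_eq_mr (X : R → C → Bool) : ∃ M ∈ RX X, M.mrk = mr X :=
  Nat.sInf_mem (Set.Nonempty.image _ ⟨_, freeOn_univ_mem_RX X⟩)

lemma mr_le_mr_of_RX_subset {R' : Type*} {X : R → C → Bool} {Y : R' → C → Bool}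
    (hXY : RX Y ⊆ RX X) : mr X ≤ mr Y := by
  obtain ⟨M, hM, hMY⟩ := exists_mem_RX_mrk_eq_mr Y
  exact hMY ▸ mr_le_mrk (hXY hM)

theorem mr_append_row_general [Fintype C] (X : R → C → Bool)
    (X' : Option R → C → Bool) (h : ∀ r c, X' (some r) c = X r c) :
    mr X ≤ mr X' ∧ mr X' ≤ mr X + 1 := by
  have hrows : ∀ r, ZRow X' {some r} = ZRow X {r} := fun r ↦ by ext c; simp [ZRow, h]
  refine ⟨mr_le_mr_of_RX_subset fun M hM ↦ ⟨hM.1, fun r ↦ hrows r ▸ hM.2 (some r)⟩, ?_⟩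
  obtain ⟨M, ⟨hME, hMflats⟩, hMr⟩ := exists_mem_RX_mrk_eq_mr X
  have : M.Finite := ⟨hME ▸ finite_univ⟩
  have hlift : M.elemLift (ZRow X' {none}) ∈ RX X' := by
    refine ⟨hME, fun r ↦ ?_⟩
    cases r with
    | none => exact Matroid.isFlat_elemLift (hME ▸ subset_univ _)
    | some r => exact hrows r ▸ (hMflats r).elemLift
  exact hMr ▸ (mr_le_mrk hlift).trans Matroid.mrk_elemLift_le

/-- appending one row to a pattern changes the matroid minimum rank
by at most one: `mr(X) ≤ mr(X') ≤ mr(X) + 1`. -/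
theorem mr_append_row [Fintype R] [Fintype C] (X : R → C → Bool)
    (X' : Option R → C → Bool) (h : ∀ r c, X' (some r) c = X r c) :
    mr X ≤ mr X' ∧ mr X' ≤ mr X + 1 :=
  mr_append_row_general X X' h
end

section
/- Let X be a zero-nonzero pattern and let X' be obtained by appending to X a new column whose zero set equals the intersection of the zero sets of some subset A of the columns of X. If M ∈ R(X) and M' is the principal extension of M obtained by freely adding a point to the closure of A (i.e., the single-element extension corresponding to the modular cut of all flats containing A), then M' ∈ R(X'). -/
open Set

variable {α β : Type*}

variable {R C : Type*}

theorem Option.eq_insert_none_image_some_preimage {S : Set (Option α)} (h : none ∈ S) :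
    S = insert none (some '' (some ⁻¹' S)) := by
  ext (_ | c) <;> simp [h]

theorem Option.eq_image_some_preimage {S : Set (Option α)} (h : none ∉ S) :
    S = some '' (some ⁻¹' S) := by
  ext (_ | c) <;> simp [h]

theorem subset_ZCol_iff_subset_ZRow {X : R → C → Bool} {A : Set C} {B : Set R} :
    B ⊆ ZCol X A ↔ A ⊆ ZRow X B :=
  ⟨fun h _ ha _ hb => h hb _ ha, fun h _ hb _ ha => h ha _ hb⟩

theorem some_preimage_ZRow {X : R → C → Bool} {X' : R → Option C → Bool}
    (hsome : ∀ r c, X' r (some c) = X r c) (B : Set R) :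
    some ⁻¹' ZRow X' B = ZRow X B := by
  ext c
  simp [ZRow, hsome]

theorem none_mem_ZRow_iff {X : R → C → Bool} {X' : R → Option C → Bool} {A : Set C}
    (hnone : ∀ r, X' r none = false ↔ r ∈ ZCol X A) {B : Set R} :
    none ∈ ZRow X' B ↔ A ⊆ ZRow X B := by
  rw [← subset_ZCol_iff_subset_ZRow]
  exact forall₂_congr fun r _ => hnone r

theorem principal_extension_mem_RX_general (X : R → C → Bool)
    (X' : R → Option C → Bool) (A : Set C)
    (hsome : ∀ r c, X' r (some c) = X r c)
    (hnone : ∀ r, X' r none = false ↔ r ∈ ZCol X A)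
    (M : Matroid C) (hM : M ∈ RX X)
    (M' : Matroid (Option C)) (hE' : M'.E = Set.univ)
    (hcut : ∀ F : Set C, M.IsFlat F → A ⊆ F → M'.IsFlat (insert none (some '' F)))
    (hnotcut : ∀ F : Set C, M.IsFlat F → ¬ A ⊆ F → M'.IsFlat (some '' F)) :
    M' ∈ RX X' := by
  refine ⟨hE', fun r => ?_⟩
  have hpre := some_preimage_ZRow hsome {r}
  by_cases hA : A ⊆ ZRow X {r}
  · rw [Option.eq_insert_none_image_some_preimage ((none_mem_ZRow_iff hnone).2 hA), hpre]
    exact hcut _ (hM.2 r) hA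
  · rw [Option.eq_image_some_preimage (mt (none_mem_ZRow_iff hnone).1 hA), hpre]
    exact hnotcut _ (hM.2 r) hA

/-- let `X'` be obtained from `X` by appending a column (the element
`none`) whose zero set is the intersection of the zero sets of a set `A` of columns
of `X`.  If `M ∈ R(X)` and `M'` is the principal extension of `M` by a point freely
added to the closure of `A` (so that for each flat `F` of `M`, `F ∪ {e}` is a flat
of `M'` when `F` belongs to the modular cut of flats containing `A`, and `F` is a
flat of `M'` otherwise), then `M' ∈ R(X')`. -/
theorem principal_extension_mem_RX [Fintype R] [Fintype C] (X : R → C → Bool)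
    (X' : R → Option C → Bool) (A : Set C)
    (hsome : ∀ r c, X' r (some c) = X r c)
    (hnone : ∀ r, X' r none = false ↔ r ∈ ZCol X A)
    (M : Matroid C) (hM : M ∈ RX X)
    (M' : Matroid (Option C)) (hE' : M'.E = Set.univ)
    (hcut : ∀ F : Set C, M.IsFlat F → A ⊆ F → M'.IsFlat (insert none (some '' F)))
    (hnotcut : ∀ F : Set C, M.IsFlat F → ¬ A ⊆ F → M'.IsFlat (some '' F)) :
    M' ∈ RX X' :=
  principal_extension_mem_RX_general X X' A hsome hnone M hM M' hE' hcut hnotcut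
end

section
/- Let X be a zero-nonzero pattern and let X' be obtained by appending a column whose zero set is the intersection of the zero sets of some subset of the columns of X. Then the matroid minimum ranks of X and X' are equal: mr(X') = mr(X). -/
open Set

variable {α β : Type*}

variable {R C : Type*}

/-!
Deleting the new column from a matroid in `RX X'` (the comap along `some`) leaves every zero set
of a row of `X` a flat, since flats of a deletion are traces of flats, and does not raise the
rank; so `mr X ≤ mr X'`. Conversely, place a new element freely on the flat spanned by `A` in a
matroid `M ∈ RX X` of minimum rank. This principal extension has the rank of `M`, and a flat `Z`
of `M`, together with the new element exactly when `A ⊆ Z`, is a flat of it; for `Z` the zero set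
of row `r` of `X` this is the zero set of row `r` of `X'`.
-/
namespace Set

variable {I : Set (Option α)}

lemma encard_preimage_some_of_none_notMem (h : none ∉ I) : (some ⁻¹' I).encard = I.encard :=
  encard_preimage_of_injective_subset_range (Option.some_injective α) fun
    | none, hx => absurd hx h
    | some x, _ => ⟨x, rfl⟩

lemma encard_preimage_some_add_one_of_none_mem (h : none ∈ I) :
    (some ⁻¹' I).encard + 1 = I.encard := by
  have hdiff : some ⁻¹' (I \ {none}) = some ⁻¹' I := by ext; simp
  rw [← hdiff, encard_preimage_some_of_none_notMem (by simp), encard_sdiff_singleton_add_one h]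

lemma encard_le_encard_preimage_some_add_one (I : Set (Option α)) :
    I.encard ≤ (some ⁻¹' I).encard + 1 := by
  by_cases h : none ∈ I
  · exact (encard_preimage_some_add_one_of_none_mem h).ge
  · exact (encard_preimage_some_of_none_notMem h).ge.trans le_self_add

end Set

namespace Matroid

variable {M : Matroid α} {A B F : Set α} {c e : α}

lemma isFlat_of_forall_insert_indep (hF : F ⊆ M.E)
    (h : ∀ ⦃I e⦄, M.Indep I → I ⊆ F → e ∈ M.E \ F → M.Indep (insert e I)) : M.IsFlat F := by
  refine isFlat_iff_closure_eq.2 (subset_antisymm ?_ (M.subset_closure F))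
  obtain ⟨I, hI⟩ := M.exists_isBasis F
  rw [← hI.closure_eq_closure]
  intro e he
  by_contra heF
  have heE := mem_ground_of_mem_closure he
  exact (hI.indep.notMem_closure_iff_of_notMem (fun heI => heF (hI.subset heI)) heE).2
    (h hI.indep hI.subset ⟨heE, heF⟩) he

lemma IsFlat.closure_subset_of_subset {X : Set α} (hF : M.IsFlat F) (hXF : X ⊆ F) :
    M.closure X ⊆ F :=
  hF.closure ▸ M.closure_subset_closure hXF

lemma IsFlat.closure_subset_iff_subset {X : Set α} (hF : M.IsFlat F) (hX : X ⊆ M.E) :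
    M.closure X ⊆ F ↔ X ⊆ F :=
  ⟨(M.subset_closure X hX).trans, hF.closure_subset_of_subset⟩

lemma IsFlat.insert_indep {I : Set α} (hF : M.IsFlat F) (hI : M.Indep I) (hIF : I ⊆ F)
    (he : e ∈ M.E \ F) : M.Indep (insert e I) :=
  hI.insert_indep_iff.2 <| .inl ⟨he.1, fun hcl => he.2 <| hF.closure_subset_of_subset hIF hcl⟩

lemma IsFlat.comap {N : Matroid β} {F : Set β} (hF : N.IsFlat F) (f : α → β) :
    (N.comap f).IsFlat (f ⁻¹' F) := by
  refine isFlat_of_forall_insert_indep (preimage_mono hF.subset_ground) fun I e hI hIF he => ?_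
  rw [comap_indep_iff] at hI ⊢
  have hfI : f '' I ⊆ F := image_subset_iff.2 hIF
  refine ⟨?_, (injOn_insert fun heI => he.2 (hIF heI)).2 ⟨hI.2, fun hfe => he.2 (hfI hfe)⟩⟩
  rw [image_insert_eq]
  exact hF.insert_indep hI.1 hfI he

lemma IsBase.mrk_eq_ncard (hB : M.IsBase B) : M.mrk = B.ncard := by
  have hrk : ncard '' {B | M.IsBase B} = {B.ncard} :=
    eq_singleton_iff_unique_mem.2
      ⟨⟨B, hB, rfl⟩, by rintro _ ⟨B', hB', rfl⟩; exact hB'.ncard_eq_ncard_of_isBase hB⟩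
  rw [mrk, hrk, csSup_singleton]

lemma mrk_comap_le (N : Matroid β) [N.RankFinite] (f : α → β) : (N.comap f).mrk ≤ N.mrk := by
  obtain ⟨B, hB⟩ := (N.comap f).exists_isBase
  obtain ⟨hBi, hBinj⟩ := comap_indep_iff.1 hB.indep
  obtain ⟨B', hB', hBB'⟩ := hBi.exists_isBase_superset
  rw [hB.mrk_eq_ncard, hB'.mrk_eq_ncard, ← hBinj.ncard_image]
  exact ncard_le_ncard hBB' hB'.finite

section PrincipalExtension

variable {I J : Set (Option α)}

def PrincipalExtIndep (M : Matroid α) (A : Set α) (I : Set (Option α)) : Prop :=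
  M.Indep (some ⁻¹' I) ∧ (none ∈ I → ¬ M.closure A ⊆ M.closure (some ⁻¹' I))

lemma principalExtIndep_insert_some (hI : M.Indep (insert c (some ⁻¹' I)))
    (hA : none ∈ I → ¬ M.closure A ⊆ M.closure (insert c (some ⁻¹' I))) :
    M.PrincipalExtIndep A (insert (some c) I) := by
  have hpre : some ⁻¹' insert (some c) I = insert c (some ⁻¹' I) := by ext; simp
  exact ⟨hpre ▸ hI, fun hn => hpre ▸ hA (by simpa using hn)⟩

lemma principalExtIndep_insert_none (hI : M.Indep (some ⁻¹' I))
    (hA : ¬ M.closure A ⊆ M.closure (some ⁻¹' I)) : M.PrincipalExtIndep A (insert none I) := by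
  have hpre : some ⁻¹' insert none I = some ⁻¹' I := by ext; simp
  exact ⟨hpre ▸ hI, fun _ => hpre ▸ hA⟩

lemma PrincipalExtIndep.exists_indep_lift (hJ : M.PrincipalExtIndep A J) :
    ∃ K, M.Indep K ∧ K.encard = J.encard ∧
      ∀ x ∈ K, some x ∈ J ∨ (none ∈ J ∧ x ∈ M.closure A) := by
  by_cases hnJ : none ∈ J
  · obtain ⟨b, hbA, hbJ⟩ := not_subset.1 (hJ.2 hnJ)
    have hbJ' : b ∉ some ⁻¹' J := fun h => hbJ (M.subset_closure _ hJ.1.subset_ground h)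
    have hbi : M.Indep (insert b (some ⁻¹' J)) :=
      hJ.1.insert_indep_iff.2 (.inl ⟨mem_ground_of_mem_closure hbA, hbJ⟩)
    refine ⟨_, hbi, ?_, fun x hx => ?_⟩
    · rw [encard_insert_of_notMem hbJ', encard_preimage_some_add_one_of_none_mem hnJ]
    · obtain rfl | hx := hx
      exacts [.inr ⟨hnJ, hbA⟩, .inl hx]
  · exact ⟨some ⁻¹' J, hJ.1, encard_preimage_some_of_none_notMem hnJ, fun x hx => .inl hx⟩

lemma PrincipalExtIndep.exists_insert_of_none_notMem (hI : M.PrincipalExtIndep A I)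
    (hJ : M.PrincipalExtIndep A J) (hIJ : I.encard < J.encard) (hnI : none ∉ I) :
    ∃ e ∈ J, e ∉ I ∧ M.PrincipalExtIndep A (insert e I) := by
  obtain ⟨K, hK, hKJ, hKmem⟩ := hJ.exists_indep_lift
  rw [← encard_preimage_some_of_none_notMem hnI, ← hKJ] at hIJ
  obtain ⟨x, ⟨hxK, hxI⟩, hxi⟩ := hI.1.augment hK hIJ
  obtain hxJ | ⟨hnJ, hxA⟩ := hKmem x hxK
  · exact ⟨some x, hxJ, hxI, principalExtIndep_insert_some hxi (absurd · hnI)⟩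
  · refine ⟨none, hnJ, hnI, principalExtIndep_insert_none hI.1 fun hAI => ?_⟩
    exact ((hI.1.insert_indep_iff_of_notMem hxI).1 hxi).2 (hAI hxA)

lemma PrincipalExtIndep.exists_insert_of_none_mem (hI : M.PrincipalExtIndep A I)
    (hJ : M.PrincipalExtIndep A J) (hIJ : I.encard < J.encard) (hnI : none ∈ I) :
    ∃ e ∈ J, e ∉ I ∧ M.PrincipalExtIndep A (insert e I) := by
  set I₀ := some ⁻¹' I
  set J₀ := some ⁻¹' J
  obtain ⟨a, haA, haI⟩ := not_subset.1 (hI.2 hnI)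
  have haI₀ : a ∉ I₀ := fun h => haI (M.subset_closure _ hI.1.subset_ground h)
  have hI' : M.Indep (insert a I₀) :=
    hI.1.insert_indep_iff.2 (.inl ⟨mem_ground_of_mem_closure haA, haI⟩)
  have hI'card : (insert a I₀).encard = I.encard := by
    rw [encard_insert_of_notMem haI₀, encard_preimage_some_add_one_of_none_mem hnI]
  by_cases hJI' : J₀ ⊆ M.closure (insert a I₀)
  · have hlt : I₀.encard < J₀.encard := by
      rw [← encard_preimage_some_add_one_of_none_mem hnI] at hIJ
      exact (ENat.add_lt_add_iff_right ENat.one_ne_top).1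
        (hIJ.trans_le J.encard_le_encard_preimage_some_add_one)
    obtain ⟨c, ⟨hcJ, hcI⟩, hci⟩ := hI.1.augment hJ.1 hlt
    refine ⟨some c, hcJ, hcI, principalExtIndep_insert_some hci fun _ hAc => ?_⟩
    have hAI' : M.closure A ⊆ M.closure (insert a I₀) :=
      hAc.trans <| M.closure_subset_closure_of_subset_closure <|
        insert_subset (hJI' hcJ) ((subset_insert _ _).trans (M.subset_closure _ hI'.subset_ground))
    -- then the lift of `J` is an independent subset of `M.closure (insert a I₀)` larger than `I`
    obtain ⟨K, hK, hKJ, hKmem⟩ := hJ.exists_indep_lift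
    have hKI' : K ⊆ M.closure (insert a I₀) := fun x hx =>
      (hKmem x hx).elim (hJI' ·) (hAI' ·.2)
    have hKle := hK.encard_le_eRk_of_subset hKI'
    rw [eRk_closure_eq, hI'.eRk_eq_encard, hI'card, hKJ] at hKle
    exact hIJ.not_ge hKle
  · obtain ⟨c, hcJ, hcI'⟩ := not_subset.1 hJI'
    have hci' : M.Indep (insert c (insert a I₀)) :=
      hI'.insert_indep_iff.2 (.inl ⟨hJ.1.subset_ground hcJ, hcI'⟩)
    have hcI₀ : c ∉ I₀ := fun h => hcI' (M.subset_closure _ hI'.subset_ground (.inr h))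
    have hci : M.Indep (insert c I₀) := hci'.subset (insert_subset_insert (subset_insert _ _))
    refine ⟨some c, hcJ, hcI₀, principalExtIndep_insert_some hci fun _ hAc => ?_⟩
    have haci : a ∉ insert c I₀ := by
      rintro (rfl | h)
      exacts [hcI' (M.subset_closure _ hI'.subset_ground (.inl rfl)), haI₀ h]
    exact (hci.notMem_closure_iff_of_notMem haci).2 (insert_comm a c I₀ ▸ hci') (hAc haA)

lemma PrincipalExtIndep.exists_insert (hI : M.PrincipalExtIndep A I)
    (hJ : M.PrincipalExtIndep A J) (hIJ : I.encard < J.encard) :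
    ∃ e ∈ J, e ∉ I ∧ M.PrincipalExtIndep A (insert e I) := by
  by_cases hnI : none ∈ I
  exacts [hI.exists_insert_of_none_mem hJ hIJ hnI, hI.exists_insert_of_none_notMem hJ hIJ hnI]

lemma PrincipalExtIndep.subset (hJ : M.PrincipalExtIndep A J) (hIJ : I ⊆ J) :
    M.PrincipalExtIndep A I :=
  ⟨hJ.1.subset (preimage_mono hIJ), fun hn hA =>
    hJ.2 (hIJ hn) (hA.trans (M.closure_subset_closure (preimage_mono hIJ)))⟩

lemma PrincipalExtIndep.encard_le (hI : M.PrincipalExtIndep A I) : I.encard ≤ M.eRank + 1 :=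
  I.encard_le_encard_preimage_some_add_one.trans (add_le_add_left hI.1.encard_le_eRank 1)

/-- The extension of `M` by a new element `none` placed freely on the flat spanned by `A`
(Oxley's principal extension `M +_F e` with `F = M.closure A`). -/
noncomputable def principalExtension (M : Matroid α) [M.RankFinite] (A : Set α) :
    Matroid (Option α) :=
  (IndepMatroid.ofBddAugment (insert none (some '' M.E)) (M.PrincipalExtIndep A)
    ⟨by simp, by simp⟩ (fun _ _ hJ hIJ => hJ.subset hIJ)
    (fun _ _ hI hJ hIJ => hI.exists_insert hJ hIJ)
    ⟨M.eRank.toNat + 1, fun _ hI => by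
      rw [Nat.cast_add_one, ENat.natCast_toNat ((eRank_ne_top_iff M).2 ‹_›)]; exact hI.encard_le⟩
    (fun I hI x hx => match x with
      | none => mem_insert _ _
      | some c => mem_insert_of_mem _ ⟨c, hI.1.subset_ground hx, rfl⟩)).matroid

variable [M.RankFinite]

@[simp] lemma principalExtension_ground :
    (M.principalExtension A).E = insert none (some '' M.E) := rfl

@[simp] lemma principalExtension_indep_iff :
    (M.principalExtension A).Indep I ↔ M.PrincipalExtIndep A I := Iff.rfl

lemma IsFlat.principalExtension {Z : Set α} {F : Set (Option α)} (hZ : M.IsFlat Z)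
    (hsome : some ⁻¹' F = Z) (hnone : none ∈ F ↔ M.closure A ⊆ Z) :
    (M.principalExtension A).IsFlat F := by
  refine isFlat_of_forall_insert_indep ?_ fun I e hI hIF he => ?_
  · rintro (_ | c) hc
    exacts [mem_insert _ _, mem_insert_of_mem _ ⟨c, hZ.subset_ground (hsome ▸ hc), rfl⟩]
  rw [principalExtension_indep_iff] at hI ⊢
  have hIZ : some ⁻¹' I ⊆ Z := hsome ▸ preimage_mono hIF
  have hclI : M.closure (some ⁻¹' I) ⊆ Z := hZ.closure_subset_of_subset hIZ
  obtain _ | c := e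
  · exact principalExtIndep_insert_none hI.1 fun hA => he.2 (hnone.2 (hA.trans hclI))
  have hcZ : c ∉ Z := fun h => he.2 (by rwa [← hsome] at h)
  have hcE : c ∈ M.E := by simpa using he.1
  refine principalExtIndep_insert_some (hZ.insert_indep hI.1 hIZ ⟨hcE, hcZ⟩) fun hnI hAc => ?_
  obtain ⟨a, haA, haI⟩ := not_subset.1 (hI.2 hnI)
  have hAZ : M.closure A ⊆ Z := hnone.1 (hIF hnI)
  exact hcZ <| hZ.closure_subset_of_subset (insert_subset (hAZ haA) hIZ)
    (mem_closure_insert haI (hAc haA))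

lemma IsBase.principalExtension (hB : M.IsBase B) :
    (M.principalExtension A).IsBase (some '' B) := by
  have hpre : some ⁻¹' (some '' B) = B := preimage_image_eq _ (Option.some_injective α)
  refine Indep.isBase_of_maximal ⟨by rw [hpre]; exact hB.indep, by simp⟩ fun J hJ hBJ => ?_
  rw [principalExtension_indep_iff] at hJ
  have hBJ₀ : B = some ⁻¹' J := hB.eq_of_subset_indep hJ.1 (hpre ▸ preimage_mono hBJ)
  have hnJ : none ∉ J := fun hn =>
    hJ.2 hn (by rw [← hBJ₀, hB.closure_eq]; exact M.closure_subset_ground A)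
  refine hBJ.antisymm fun x hx => ?_
  obtain _ | c := x
  exacts [absurd hx hnJ, ⟨c, hBJ₀ ▸ hx, rfl⟩]

lemma mrk_principalExtension : (M.principalExtension A).mrk = M.mrk := by
  obtain ⟨B, hB⟩ := M.exists_isBase
  rw [hB.principalExtension.mrk_eq_ncard, hB.mrk_eq_ncard,
    (Option.some_injective α).injOn.ncard_image]

end PrincipalExtension

end Matroid

section MinimumRank

variable {X : R → C → Bool} {X' : R → Option C → Bool} {A : Set C}

lemma zRow_singleton_eq_preimage_some (hsome : ∀ r c, X' r (some c) = X r c) (r : R) :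
    ZRow X {r} = some ⁻¹' ZRow X' {r} := by
  ext
  simp [ZRow, hsome]

lemma comap_some_mem_RX (hsome : ∀ r c, X' r (some c) = X r c) {M' : Matroid (Option C)}
    (hM' : M' ∈ RX X') : M'.comap some ∈ RX X :=
  ⟨by simp [hM'.1], fun r => zRow_singleton_eq_preimage_some hsome r ▸ (hM'.2 r).comap some⟩

lemma principalExtension_mem_RX [Finite C] (hsome : ∀ r c, X' r (some c) = X r c)
    (hnone : ∀ r, X' r none = false ↔ r ∈ ZCol X A) {M : Matroid C} (hM : M ∈ RX X) :
    M.principalExtension A ∈ RX X' := by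
  refine ⟨by rw [Matroid.principalExtension_ground, hM.1, image_univ, insert_none_range_some],
    fun r => (hM.2 r).principalExtension (zRow_singleton_eq_preimage_some hsome r).symm ?_⟩
  rw [(hM.2 r).closure_subset_iff_subset (hM.1 ▸ subset_univ A)]
  simp [ZRow, ZCol, hnone, subset_def]

end MinimumRank

theorem mr_append_column_general [Fintype C] (X : R → C → Bool)
    (X' : R → Option C → Bool) (A : Set C)
    (hsome : ∀ r c, X' r (some c) = X r c)
    (hnone : ∀ r, X' r none = false ↔ r ∈ ZCol X A) :
    mr X' = mr X := by
  apply le_antisymm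
  · obtain ⟨M, hM, hMr⟩ := exists_mem_RX_mrk_eq_mr X
    calc mr X' ≤ (M.principalExtension A).mrk :=
          mr_le_mrk (principalExtension_mem_RX hsome hnone hM)
      _ = mr X := by rw [Matroid.mrk_principalExtension, hMr]
  · obtain ⟨M', hM', hMr'⟩ := exists_mem_RX_mrk_eq_mr X'
    calc mr X ≤ (M'.comap some).mrk := mr_le_mrk (comap_some_mem_RX hsome hM')
      _ ≤ M'.mrk := M'.mrk_comap_le some
      _ = mr X' := hMr'

/-- appending a column whose zero set is the intersection of the
zero sets of some set of columns does not change the matroid minimum rank. -/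
theorem mr_append_column [Fintype R] [Fintype C] (X : R → C → Bool)
    (X' : R → Option C → Bool) (A : Set C)
    (hsome : ∀ r c, X' r (some c) = X r c)
    (hnone : ∀ r, X' r none = false ↔ r ∈ ZCol X A) :
    mr X' = mr X :=
  mr_append_column_general X X' A hsome hnone
end

section
/- Let M be a matroid with fundamental pattern X, and suppose M' is a matroid on a ground set indexed by the hyperplanes of M with r(M') = r(M), such that for each element p of the ground set of M, the set of hyperplanes of M containing p is a flat of M'. Then the map sending each flat F of M to the set of hyperplanes of M containing F is an injective, inclusion-reversing map from the flats of M to the flats of M', restricting to a bijection from hyperplanes of M to singletons (points) of M'. -/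
open Set

variable {α β : Type*}

/-!
Every flat `F` is the intersection of the hyperplanes containing it, so `φ(F)` is the
intersection of the flats `φ({p})`, `p ∈ F`, and `φ` determines `F`. A hyperplane `H` is
contained in no other hyperplane, so `φ(H) = {H}`; this singleton is a flat of `M'`, and it is
not a loop because it avoids the flat `φ({p})` for any `p ∉ H`. Hence `φ(H)` is a point of `M'`,
and every point of `M'`, being the closure of a singleton, arises this way.
-/

namespace Matroid

variable {M : Matroid α} {F H : Set α} {e : α}

lemma IsFlat.isHyperplane_of_forall_isFlat_ssuperset_mem (hH : M.IsFlat H) (he : e ∈ M.E)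
    (heH : e ∉ H) (hmax : ∀ G, M.IsFlat G → H ⊂ G → e ∈ G) : M.IsHyperplane H := by
  refine ⟨hH, fun h ↦ heH (h ▸ he), fun G hG hHG ↦ ?_⟩
  obtain rfl | hHG := hHG.eq_or_ssubset
  · exact .inl rfl
  refine .inr (hG.subset_ground.antisymm fun f hf ↦ by_contra fun hfG ↦ ?_)
  -- `e` lies in the flat spanned by `H` and `f`, so by exchange `f` lies in the one spanned
  -- by `H` and `e`, which is inside `G`.
  have hfH : f ∉ H := fun h ↦ hfG (hHG.subset h)
  have hfHE : insert f H ⊆ M.E := insert_subset hf hH.subset_ground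
  have hHf : H ⊂ M.closure (insert f H) :=
    ssubset_of_subset_of_ne ((subset_insert f H).trans (M.subset_closure _ hfHE))
      fun h ↦ hfH (h ▸ M.mem_closure_of_mem (mem_insert f H) hfHE)
  have hfe : f ∈ M.closure (insert e H) :=
    mem_closure_insert (hH.closure.symm ▸ heH) (hmax _ (M.isFlat_closure _) hHf)
  have hG' : M.closure (insert e H) ⊆ G :=
    hG.closure ▸ M.closure_subset_closure (insert_subset (hmax G hG hHG) hHG.subset)
  exact hfG (hG' hfe)

lemma IsFlat.exists_isHyperplane_superset_notMem [M.Finite] (hF : M.IsFlat F) (he : e ∈ M.E)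
    (heF : e ∉ F) : ∃ H, M.IsHyperplane H ∧ F ⊆ H ∧ e ∉ H := by
  have hfin : {G | M.IsFlat G ∧ e ∉ G}.Finite :=
    M.ground_finite.finite_subsets.subset fun G hG ↦ hG.1.subset_ground
  obtain ⟨H, hFH, ⟨hH, heH⟩, hmax⟩ := hfin.exists_le_maximal (a := F) ⟨hF, heF⟩
  refine ⟨H, hH.isHyperplane_of_forall_isFlat_ssuperset_mem he heH fun G hG hHG ↦ ?_, hFH, heH⟩
  by_contra heG
  exact hHG.not_subset (hmax ⟨hG, heG⟩ hHG.subset)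

lemma IsFlat.isPoint_singleton {N : Matroid β} {x : β} (h : N.IsFlat {x})
    (hx : x ∉ N.closure ∅) : N.IsPoint {x} :=
  ⟨h, x, hx, h.closure.symm⟩

/-- The map `φ` of the paper. -/
def hyperplanesContaining (M : Matroid α) (F : Set α) : Set {H : Set α // M.IsHyperplane H} :=
  {H | F ⊆ H.1}

lemma hyperplanesContaining_antitone : Antitone M.hyperplanesContaining :=
  fun _ _ hF₁₂ _ hH ↦ hF₁₂.trans hH

lemma IsHyperplane.hyperplanesContaining_eq (hH : M.IsHyperplane H) :
    M.hyperplanesContaining H = {⟨H, hH⟩} := by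
  ext ⟨H', hH'⟩
  simp only [hyperplanesContaining, mem_ofPred_eq, mem_singleton_iff, Subtype.mk.injEq]
  refine ⟨fun hHH' ↦ ?_, fun h ↦ h ▸ Subset.rfl⟩
  exact (hH.2.2 H' hH'.1 hHH').resolve_right hH'.2.1

lemma subset_of_hyperplanesContaining_subset [M.Finite] {F₁ F₂ : Set α} (hF₁ : F₁ ⊆ M.E)
    (hF₂ : M.IsFlat F₂) (h : M.hyperplanesContaining F₂ ⊆ M.hyperplanesContaining F₁) :
    F₁ ⊆ F₂ := by
  intro e heF₁
  by_contra heF₂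
  obtain ⟨H, hH, hF₂H, heH⟩ := hF₂.exists_isHyperplane_superset_notMem (hF₁ heF₁) heF₂
  exact heH (h (show ⟨H, hH⟩ ∈ M.hyperplanesContaining F₂ from hF₂H) heF₁)

lemma hyperplanesContaining_injOn [M.Finite] :
    InjOn M.hyperplanesContaining {F | M.IsFlat F} := fun _ hF₁ _ hF₂ h ↦
  (subset_of_hyperplanesContaining_subset hF₁.subset_ground hF₂ h.ge).antisymm
    (subset_of_hyperplanesContaining_subset hF₂.subset_ground hF₁ h.le)

variable {M' : Matroid {H : Set α // M.IsHyperplane H}}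

lemma isFlat_hyperplanesContaining (hE' : M'.E = univ)
    (hflat : ∀ p ∈ M.E, M'.IsFlat (M.hyperplanesContaining {p})) (hF : F ⊆ M.E) :
    M'.IsFlat (M.hyperplanesContaining F) := by
  obtain rfl | hne := F.eq_empty_or_nonempty
  · convert M'.ground_isFlat
    simp [hE', hyperplanesContaining]
  have : Nonempty F := hne.to_subtype
  convert IsFlat.iInter fun p : F ↦ hflat p (hF p.2)
  ext
  simp [hyperplanesContaining, subset_def]

lemma IsHyperplane.notMem_loops (hflat : ∀ p ∈ M.E, M'.IsFlat (M.hyperplanesContaining {p}))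
    (hH : M.IsHyperplane H) : ⟨H, hH⟩ ∉ M'.closure ∅ := fun hloop ↦ by
  obtain ⟨p, hp, hpH⟩ := exists_of_ssubset (hH.1.subset_ground.ssubset_of_ne hH.2.1)
  exact hpH <| singleton_subset_iff.mp ((hflat p hp).loops_subset hloop)

end Matroid

open Matroid in
theorem adjoint_map_of_transpose_class_general (M : Matroid α) [M.Finite]
    (M' : Matroid {H : Set α // M.IsHyperplane H})
    (hE' : M'.E = Set.univ)
    (hflat : ∀ p ∈ M.E, M'.IsFlat {H : {H : Set α // M.IsHyperplane H} | p ∈ H.1}) :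
    (∀ Fl, M.IsFlat Fl →
        M'.IsFlat {H : {H : Set α // M.IsHyperplane H} | Fl ⊆ H.1}) ∧
    Set.InjOn (fun Fl => {H : {H : Set α // M.IsHyperplane H} | Fl ⊆ H.1})
      {Fl | M.IsFlat Fl} ∧
    (∀ F₁ F₂, M.IsFlat F₁ → M.IsFlat F₂ → F₁ ⊆ F₂ →
        {H : {H : Set α // M.IsHyperplane H} | F₂ ⊆ H.1} ⊆
          {H : {H : Set α // M.IsHyperplane H} | F₁ ⊆ H.1}) ∧
    Set.BijOn (fun Fl => {H : {H : Set α // M.IsHyperplane H} | Fl ⊆ H.1})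
      {H | M.IsHyperplane H} {P | M'.IsPoint P} := by
  have hflat' : ∀ p ∈ M.E, M'.IsFlat (M.hyperplanesContaining {p}) := by
    simpa [hyperplanesContaining] using hflat
  have hφflat : ∀ F ⊆ M.E, M'.IsFlat (M.hyperplanesContaining F) :=
    fun _ ↦ isFlat_hyperplanesContaining hE' hflat'
  have hsingleton : ∀ H : {H : Set α // M.IsHyperplane H}, M'.IsFlat {H} := fun H ↦
    H.2.hyperplanesContaining_eq ▸ hφflat H.1 H.2.1.subset_ground
  refine ⟨fun F hF ↦ hφflat F hF.subset_ground, hyperplanesContaining_injOn,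
    fun _ _ _ _ h ↦ hyperplanesContaining_antitone h,
    ⟨fun H hH ↦ ?_, hyperplanesContaining_injOn.mono fun _ hH ↦ hH.1, ?_⟩⟩
  · change M'.IsPoint (M.hyperplanesContaining H)
    rw [hH.hyperplanesContaining_eq]
    exact (hsingleton _).isPoint_singleton (hH.notMem_loops hflat')
  · rintro _ ⟨-, H, -, rfl⟩
    refine ⟨H.1, H.2, ?_⟩
    change M.hyperplanesContaining H.1 = M'.closure {H}
    rw [H.2.hyperplanesContaining_eq, (hsingleton H).closure]

/-- let `M'` be a matroid on the set of hyperplanes of `M`, of the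
same rank as `M`, such that for each point `p` of the ground set the set of
hyperplanes through `p` is a flat of `M'` (i.e. `M' ∈ R(Xᵀ)` for the fundamental
pattern `X` of `M`).  Then `φ(F) = {H : hyperplane of M | F ⊆ H}` is an injective,
inclusion-reversing map from flats of `M` to flats of `M'` restricting to a
bijection from the hyperplanes of `M` onto the points of `M'`. -/
theorem adjoint_map_of_transpose_class (M : Matroid α) [M.Finite]
    (M' : Matroid {H : Set α // M.IsHyperplane H})
    (hE' : M'.E = Set.univ) (hrk : M'.mrk = M.mrk)
    (hflat : ∀ p ∈ M.E, M'.IsFlat {H : {H : Set α // M.IsHyperplane H} | p ∈ H.1}) :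
    (∀ Fl, M.IsFlat Fl →
        M'.IsFlat {H : {H : Set α // M.IsHyperplane H} | Fl ⊆ H.1}) ∧
    Set.InjOn (fun Fl => {H : {H : Set α // M.IsHyperplane H} | Fl ⊆ H.1})
      {Fl | M.IsFlat Fl} ∧
    (∀ F₁ F₂, M.IsFlat F₁ → M.IsFlat F₂ → F₁ ⊆ F₂ →
        {H : {H : Set α // M.IsHyperplane H} | F₂ ⊆ H.1} ⊆
          {H : {H : Set α // M.IsHyperplane H} | F₁ ⊆ H.1}) ∧
    Set.BijOn (fun Fl => {H : {H : Set α // M.IsHyperplane H} | Fl ⊆ H.1})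
      {H | M.IsHyperplane H} {P | M'.IsPoint P} :=
  adjoint_map_of_transpose_class_general M M' hE' hflat
end
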